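/- Suppose each f_i is convex and L_i-smooth and F is μ-strongly convex with μ > 0 and minimizer x*. Let θ₁, θ₂ > 0 with θ₁ + θ₂ ≤ 1, κ = μ/L̄, and η = θ₂/((1 + θ₂)θ₁). Let z, w, v ∈ ℝ^d, x = θ₁z + θ₂w + (1 − θ₁ − θ₂)v, and for a probability vector p with positive entries set g_i = (1/(n p_i))(∇f_i(x) − ∇f_i(w)) + ∇F(w), z'_i = (1/(1 + ηκ))(ηκ·x + z − (η/L̄)g_i), v'_i = x + θ₁(z'_i − z). With Z(u) = (L̄(1 + ηκ)/(2η))‖u − x*‖² and V(u) = (1/θ₁)(F(u) − F(x*)), it holds that ∑_{i=1}^n p_i (Z(z'_i) + V(v'_i)) ≤ (1 − θ₁ − θ₂)·V(v) + (1/(1 + ηκ))·Z(z) + (θ₂/θ₁)(F(w) − F(x*)) + (θ₂/(2L̄θ₁))(V_e(p; x, w) − V_e(p^IS; x, w)). -/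

import Mathlib

/-!
Per sample, `z'_i` is a proximal step and `v'_i` a gradient step from `x`. The descent lemma for
`F` at `x`, Young's inequality on the noise `∇F(x) - g_i` and the three-point inequality of the
proximal step combine so that the `‖z'_i - z‖²` terms cancel exactly.
Averaging over `i ~ p` turns `g_i` into `∇F(x)` and the noise into at most `V_e(p)`, while
cocoercivity of each `∇f_i` bounds `V_e(p^IS)` by `2 L̄` times the Bregman divergence of `F` from
`x` to `w`, which is absorbed by the momentum term `θ₂ ⟪∇F(x), w - x⟫`. Strong convexity at `x`
towards `x*`, convexity towards `v` and the coupling `x = θ₁ z + θ₂ w + (1 - θ₁ - θ₂) v` close the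
estimate.
-/

open MeasureTheory Finset
open scoped RealInnerProductSpace BigOperators

abbrev Euc (d : ℕ) := EuclideanSpace ℝ (Fin d)

/-- The finite-sum objective `F(x) = (1/n) ∑ f i x`. -/
noncomputable def avgF {d : ℕ} (n : ℕ) (f : Fin n → Euc d → ℝ) (x : Euc d) : ℝ :=
  (1 / (n : ℝ)) * ∑ i, f i x

/-- The gradient of the finite-sum objective, `∇F(x) = (1/n) ∑ ∇f i x`. -/
noncomputable def avgG {d : ℕ} (n : ℕ) (f' : Fin n → Euc d → Euc d) (x : Euc d) : Euc d :=
  (1 / (n : ℝ)) • ∑ i, f' i x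

/-- The effective sampling variance `V_e(q; x, w)`. -/
noncomputable def Ve {d : ℕ} (n : ℕ) (f' : Fin n → Euc d → Euc d)
    (q : Fin n → ℝ) (x w : Euc d) : ℝ :=
  (1 / (n : ℝ) ^ 2) * ∑ i, (1 / q i) * ‖f' i x - f' i w‖ ^ 2

/-- The average smoothness constant `L̄ = (1/n) ∑ L i`. -/
noncomputable def Lbar (n : ℕ) (L : Fin n → ℝ) : ℝ := (1 / (n : ℝ)) * ∑ i, L i

/-- The importance sampling distribution `p^IS_i = L i / (n L̄)`. -/
noncomputable def pIS (n : ℕ) (L : Fin n → ℝ) (i : Fin n) : ℝ :=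
  L i / ((n : ℝ) * Lbar n L)

/-- `D(w) = (1/n) ∑ (1 / L i) ‖∇f i w - ∇f i x*‖²`. -/
noncomputable def Dfun {d : ℕ} (n : ℕ) (f' : Fin n → Euc d → Euc d) (L : Fin n → ℝ)
    (xstar w : Euc d) : ℝ :=
  (1 / (n : ℝ)) * ∑ i, (1 / L i) * ‖f' i w - f' i xstar‖ ^ 2

section InnerProductSpace

variable {E : Type*} [NormedAddCommGroup E] [InnerProductSpace ℝ E]

def bregmanDiv (φ : E → ℝ) (φ' : E → E) (x y : E) : ℝ :=
  φ y - φ x - ⟪φ' x, y - x⟫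

theorem HasGradientAt.hasDerivAt_comp_add_smul [CompleteSpace E] {φ : E → ℝ} {g x v : E} {t : ℝ}
    (h : HasGradientAt φ g (x + t • v)) :
    HasDerivAt (fun s : ℝ => φ (x + s • v)) ⟪g, v⟫ t := by
  have hline : HasDerivAt (fun s : ℝ => x + s • v) v t := by
    simpa using ((hasDerivAt_id t).smul_const v).const_add x
  have hcomp := h.hasFDerivAt.comp_hasDerivAt t hline
  simp only [InnerProductSpace.toDual_apply_apply] at hcomp
  exact hcomp

theorem le_add_inner_add_sq_of_gradient_lipschitz [CompleteSpace E] {φ : E → ℝ} {φ' : E → E}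
    {C : ℝ} (hgrad : ∀ u, HasGradientAt φ (φ' u) u)
    (hlip : ∀ u v, ‖φ' u - φ' v‖ ≤ C * ‖u - v‖) (x y : E) :
    φ y ≤ φ x + ⟪φ' x, y - x⟫ + C / 2 * ‖y - x‖ ^ 2 := by
  set v := y - x
  let ψ : ℝ → ℝ := fun t => φ (x + t • v) - t * ⟪φ' x, v⟫ - C / 2 * t ^ 2 * ‖v‖ ^ 2
  have hψ : ∀ t, HasDerivAt ψ (⟪φ' (x + t • v) - φ' x, v⟫ - C * t * ‖v‖ ^ 2) t := fun t => by
    have hφ := (hgrad (x + t • v)).hasDerivAt_comp_add_smul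
    have hlin : HasDerivAt (fun s : ℝ => s * ⟪φ' x, v⟫) ⟪φ' x, v⟫ t := by
      simpa using (hasDerivAt_id t).mul_const ⟪φ' x, v⟫
    have hquad : HasDerivAt (fun s : ℝ => C / 2 * s ^ 2 * ‖v‖ ^ 2) (C * t * ‖v‖ ^ 2) t := by
      refine (((hasDerivAt_pow 2 t).const_mul (C / 2)).mul_const (‖v‖ ^ 2)).congr_deriv ?_
      push_cast
      ring
    rw [inner_sub_left]
    exact (hφ.sub hlin).sub hquad
  have hanti : AntitoneOn ψ (Set.Ici 0) := by
    refine antitoneOn_of_hasDerivWithinAt_nonpos (convex_Ici 0)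
      (fun t _ => (hψ t).continuousAt.continuousWithinAt) (fun t _ => (hψ t).hasDerivWithinAt)
      fun t ht => ?_
    rw [interior_Ici, Set.mem_Ioi] at ht
    have hstep : ‖φ' (x + t • v) - φ' x‖ ≤ C * (t * ‖v‖) := by
      simpa [norm_smul, abs_of_pos ht] using hlip (x + t • v) x
    nlinarith [real_inner_le_norm (φ' (x + t • v) - φ' x) v, norm_nonneg v]
  have h01 := hanti Set.self_mem_Ici (Set.mem_Ici.2 zero_le_one) zero_le_one
  simp only [ψ, one_smul, zero_smul, add_zero, one_mul, one_pow, zero_mul, sub_zero,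
    zero_pow two_ne_zero, v, add_sub_cancel] at h01
  linarith

theorem sq_norm_sub_div_le_bregmanDiv [CompleteSpace E] {φ : E → ℝ} {φ' : E → E} {C : ℝ}
    (hC : 0 < C) (hgrad : ∀ u, HasGradientAt φ (φ' u) u)
    (hconv : ∀ u v, φ u + ⟪φ' u, v - u⟫ ≤ φ v)
    (hlip : ∀ u v, ‖φ' u - φ' v‖ ≤ C * ‖u - v‖) (x y : E) :
    ‖φ' y - φ' x‖ ^ 2 / (2 * C) ≤ bregmanDiv φ φ' x y := by
  set D := φ' y - φ' x
  -- a gradient step from `y` with step size `1 / C`, compared with the tangent plane at `x`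
  set u := y - C⁻¹ • D
  have hdesc := le_add_inner_add_sq_of_gradient_lipschitz hgrad hlip y u
  have htan := hconv x u
  have hu : u - y = -(C⁻¹ • D) := by simp [u]
  have hux : u - x = (y - x) + (u - y) := by abel
  rw [hux, inner_add_right] at htan
  rw [hu, norm_neg, norm_smul, inner_neg_right, real_inner_smul_right] at hdesc
  rw [hu, inner_neg_right, real_inner_smul_right] at htan
  have hD : ⟪φ' y, D⟫ - ⟪φ' x, D⟫ = ‖D‖ ^ 2 := by
    rw [← inner_sub_left, real_inner_self_eq_norm_sq]
  rw [Real.norm_eq_abs, abs_inv, abs_of_pos hC] at hdesc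
  unfold bregmanDiv
  have : ‖D‖ ^ 2 / (2 * C) = C⁻¹ * ‖D‖ ^ 2 - C / 2 * (C⁻¹ * ‖D‖) ^ 2 := by
    field_simp; ring
  rw [this]
  linear_combination hdesc + htan - C⁻¹ * hD

theorem real_inner_le_sq_div_add_mul_sq {β : ℝ} (hβ : 0 < β) (u v : E) :
    ⟪u, v⟫ ≤ ‖u‖ ^ 2 / (2 * β) + β / 2 * ‖v‖ ^ 2 := by
  have hamgm : 2 * β * (‖u‖ * ‖v‖) ≤ ‖u‖ ^ 2 + β ^ 2 * ‖v‖ ^ 2 := by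
    nlinarith [sq_nonneg (‖u‖ - β * ‖v‖)]
  calc ⟪u, v⟫ ≤ ‖u‖ * ‖v‖ := real_inner_le_norm u v
    _ ≤ (‖u‖ ^ 2 + β ^ 2 * ‖v‖ ^ 2) / (2 * β) := by rw [le_div_iff₀ (by positivity)]; linarith
    _ = ‖u‖ ^ 2 / (2 * β) + β / 2 * ‖v‖ ^ 2 := by field_simp

/-- Three-point inequality for the minimiser `y` of
`u ↦ ⟪g, u⟫ + a / 2 * ‖u - x‖ ^ 2 + b / 2 * ‖u - z‖ ^ 2`. -/
theorem inner_add_sq_le_of_eq_smul_add_smul {a b : ℝ} (ha : 0 ≤ a) {g x y z : E}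
    (hg : g = a • (x - y) + b • (z - y)) (u : E) :
    ⟪g, y - u⟫ + (a + b) / 2 * ‖y - u‖ ^ 2 + b / 2 * ‖y - z‖ ^ 2 ≤
      a / 2 * ‖x - u‖ ^ 2 + b / 2 * ‖z - u‖ ^ 2 := by
  have hx := norm_add_sq_real (x - y) (y - u)
  have hz := norm_add_sq_real (z - y) (y - u)
  rw [sub_add_sub_cancel] at hx hz
  rw [norm_sub_rev y z, hg, inner_add_left, real_inner_smul_left, real_inner_smul_left]
  linear_combination -a / 2 * hx - b / 2 * hz + mul_nonneg ha (sq_nonneg ‖x - y‖) / 2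

theorem sum_mul_sq_norm_sub_sum_smul {ι : Type*} [Fintype ι] {p : ι → ℝ} (hp : ∑ i, p i = 1)
    (a : ι → E) :
    ∑ i, p i * ‖∑ j, p j • a j - a i‖ ^ 2 = ∑ i, p i * ‖a i‖ ^ 2 - ‖∑ j, p j • a j‖ ^ 2 := by
  set c := ∑ j, p j • a j
  have hc : ∑ i, p i * ⟪c, a i⟫ = ‖c‖ ^ 2 := by
    simp only [← real_inner_smul_right, ← inner_sum, c, real_inner_self_eq_norm_sq]
  simp only [norm_sub_sq_real, mul_add, mul_sub, sum_add_distrib, sum_sub_distrib, ← sum_mul,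
    hp, one_mul]
  rw [← hc]
  simp only [mul_left_comm (p _) 2, ← mul_sum]
  ring

theorem sum_mul_add_mul_add_inner {ι : Type*} [Fintype ι] {p : ι → ℝ} (hp : ∑ i, p i = 1)
    (A c : ℝ) (s : ι → ℝ) (g : ι → E) (y : E) :
    ∑ i, p i * (A + c * s i + ⟪g i, y⟫) = A + c * ∑ i, p i * s i + ⟪∑ i, p i • g i, y⟫ := by
  simp only [mul_add, sum_add_distrib, ← sum_mul, hp, one_mul, mul_left_comm (p _) c, ← mul_sum,
    sum_inner, real_inner_smul_left]

theorem lkatyusha_step_le [CompleteSpace E] {F : E → ℝ} {F' : E → E} {Lb μ κ η θ₁ θ₂ : ℝ}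
    (hLb : 0 < Lb) (hgrad : ∀ u, HasGradientAt F (F' u) u)
    (hlip : ∀ u v, ‖F' u - F' v‖ ≤ Lb * ‖u - v‖) (hμ : 0 ≤ μ) (hθ₁ : 0 < θ₁) (hθ₂ : 0 < θ₂)
    (hκ : κ = μ / Lb) (hη : η = θ₂ / ((1 + θ₂) * θ₁)) {x z xstar g z' : E}
    (hz' : z' = (1 / (1 + η * κ)) • (η • κ • x + z - (η / Lb) • g)) :
    Lb * (1 + η * κ) / (2 * η) * ‖z' - xstar‖ ^ 2 + 1 / θ₁ * (F (x + θ₁ • (z' - z)) - F xstar) ≤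
      1 / θ₁ * (F x - F xstar) + μ / 2 * ‖x - xstar‖ ^ 2 + Lb / (2 * η) * ‖z - xstar‖ ^ 2 +
      θ₂ / (2 * Lb * θ₁) * ‖F' x - g‖ ^ 2 + ⟪g, xstar - z⟫ := by
  have hη0 : 0 < η := by rw [hη]; positivity
  -- the optimality condition of the proximal step defining `z'`
  have hg : g = μ • (x - z') + (Lb / η) • (z - z') := by
    rw [hz', hκ]
    match_scalars <;> field_simp <;> ring
  have hprox := inner_add_sq_le_of_eq_smul_add_smul hμ hg xstar
  have hdesc : 1 / θ₁ * (F (x + θ₁ • (z' - z)) - F x) ≤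
      ⟪F' x, z' - z⟫ + Lb * θ₁ / 2 * ‖z' - z‖ ^ 2 := by
    have h := le_add_inner_add_sq_of_gradient_lipschitz hgrad hlip x (x + θ₁ • (z' - z))
    rw [add_sub_cancel_left, real_inner_smul_right, norm_smul, Real.norm_eq_abs,
      abs_of_pos hθ₁] at h
    rw [one_div_mul_eq_div, div_le_iff₀ hθ₁]
    linarith
  have hyoung := real_inner_le_sq_div_add_mul_sq (β := Lb * θ₁ / θ₂) (by positivity) (F' x - g)
    (z' - z)
  have hsplit : ⟪F' x, z' - z⟫ = ⟪F' x - g, z' - z⟫ + ⟪g, z' - xstar⟫ + ⟪g, xstar - z⟫ := by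
    rw [inner_sub_left, add_assoc, ← inner_add_right, sub_add_sub_cancel]
    ring
  have hcoef₁ : Lb * (1 + η * κ) / (2 * η) = (μ + Lb / η) / 2 := by
    rw [hκ]; field_simp; ring
  have hcoef₂ : Lb / (2 * η) = (Lb / η) / 2 := by ring
  -- the choice of `η`: the `‖z' - z‖ ^ 2` terms of the descent and Young steps cancel exactly
  have hcoef₃ : (Lb / η) / 2 = Lb * θ₁ / 2 + (Lb * θ₁ / θ₂) / 2 := by
    rw [hη]; field_simp; ring
  have hcoef₄ : ‖F' x - g‖ ^ 2 / (2 * (Lb * θ₁ / θ₂)) = θ₂ / (2 * Lb * θ₁) * ‖F' x - g‖ ^ 2 := by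
    field_simp
  rw [hcoef₄] at hyoung
  rw [hcoef₁, hcoef₂]
  rw [hcoef₃] at hprox ⊢
  linarith

theorem inner_sub_add_le_of_coupling {F : E → ℝ} {F' : E → E} {μ θ₁ θ₂ : ℝ} (hμ : 0 ≤ μ)
    (hθ₁ : 0 < θ₁) (hθsum : θ₁ + θ₂ ≤ 1) {x z w v xstar : E}
    (hsc : ∀ y, F x + ⟪F' x, y - x⟫ + μ / 2 * ‖y - x‖ ^ 2 ≤ F y)
    (hx : x = θ₁ • z + θ₂ • w + (1 - θ₁ - θ₂) • v) :
    ⟪F' x, xstar - z⟫ + 1 / θ₁ * (F x - F xstar) + μ / 2 * ‖x - xstar‖ ^ 2 +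
        θ₂ / θ₁ * bregmanDiv F F' x w ≤
      (1 - θ₁ - θ₂) * (1 / θ₁ * (F v - F xstar)) + θ₂ / θ₁ * (F w - F xstar) := by
  have hcomb : θ₁ • (x - z) = θ₂ • (w - x) + (1 - θ₁ - θ₂) • (v - x) := by
    rw [hx]; module
  have hinner : θ₁ * ⟪F' x, x - z⟫ = θ₂ * ⟪F' x, w - x⟫ + (1 - θ₁ - θ₂) * ⟪F' x, v - x⟫ := by
    simp only [← real_inner_smul_right, ← inner_add_right, hcomb]
  have hv : (1 - θ₁ - θ₂) * ⟪F' x, v - x⟫ ≤ (1 - θ₁ - θ₂) * (F v - F x) := by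
    have := hsc v
    gcongr
    · linarith
    · nlinarith [sq_nonneg ‖v - x‖]
  have hstar := hsc xstar
  rw [norm_sub_rev] at hstar
  have hscaled : θ₁ * ⟪F' x, xstar - z⟫ + (F x - F xstar) + θ₁ * (μ / 2 * ‖x - xstar‖ ^ 2) +
      θ₂ * bregmanDiv F F' x w ≤ (1 - θ₁ - θ₂) * (F v - F xstar) + θ₂ * (F w - F xstar) := by
    rw [show xstar - z = (xstar - x) + (x - z) by abel, inner_add_right, bregmanDiv]
    nlinarith
  have hθ₁0 := hθ₁.ne'
  refine (Eq.trans_le ?_ (div_le_div_of_nonneg_right hscaled hθ₁.le)).trans_eq ?_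
  · field_simp
  · ring

end InnerProductSpace

section FiniteSum

variable {d n : ℕ}

theorem Lbar_pos (hn : 0 < n) {L : Fin n → ℝ} (hL : ∀ i, 0 < L i) : 0 < Lbar n L := by
  have : Nonempty (Fin n) := ⟨⟨0, hn⟩⟩
  exact mul_pos (by positivity) (sum_pos (fun i _ => hL i) univ_nonempty)

theorem hasGradientAt_avgF {f : Fin n → Euc d → ℝ} {f' : Fin n → Euc d → Euc d} {x : Euc d}
    (hgrad : ∀ i, HasGradientAt (f i) (f' i x) x) :
    HasGradientAt (avgF n f) (avgG n f' x) x := by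
  rw [hasGradientAt_iff_hasFDerivAt, avgG, map_smul, map_sum]
  exact (HasFDerivAt.fun_sum fun i _ => (hgrad i).hasFDerivAt).const_mul _

theorem norm_avgG_sub_le {f' : Fin n → Euc d → Euc d} {L : Fin n → ℝ}
    (hsmooth : ∀ i x y, ‖f' i x - f' i y‖ ≤ L i * ‖x - y‖) (x y : Euc d) :
    ‖avgG n f' x - avgG n f' y‖ ≤ Lbar n L * ‖x - y‖ := by
  rw [avgG, avgG, ← smul_sub, ← sum_sub_distrib, norm_smul, Lbar, mul_assoc, sum_mul]
  gcongr
  · simp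
  · exact (norm_sum_le _ _).trans (sum_le_sum fun i _ => hsmooth i x y)

theorem bregmanDiv_avgF (f : Fin n → Euc d → ℝ) (f' : Fin n → Euc d → Euc d) (x y : Euc d) :
    bregmanDiv (avgF n f) (avgG n f') x y = (1 / (n : ℝ)) * ∑ i, bregmanDiv (f i) (f' i) x y := by
  simp only [bregmanDiv, avgF, avgG, real_inner_smul_left, sum_inner, sum_sub_distrib]
  ring

theorem Ve_pIS_le_two_mul_bregmanDiv (hn : 0 < n) {f : Fin n → Euc d → ℝ}
    {f' : Fin n → Euc d → Euc d} {L : Fin n → ℝ} (hgrad : ∀ i x, HasGradientAt (f i) (f' i x) x)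
    (hconv : ∀ i x y, f i x + ⟪f' i x, y - x⟫ ≤ f i y) (hL : ∀ i, 0 < L i)
    (hsmooth : ∀ i x y, ‖f' i x - f' i y‖ ≤ L i * ‖x - y‖) (x w : Euc d) :
    Ve n f' (pIS n L) x w ≤ 2 * Lbar n L * bregmanDiv (avgF n f) (avgG n f') x w := by
  have hnR : (n : ℝ) ≠ 0 := by positivity
  have hLbar := (Lbar_pos hn hL).ne'
  calc Ve n f' (pIS n L) x w
      = 2 * Lbar n L * ((1 / (n : ℝ)) * ∑ i, ‖f' i w - f' i x‖ ^ 2 / (2 * L i)) := by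
        simp only [Ve, pIS, mul_sum, norm_sub_rev (f' _ x)]
        refine sum_congr rfl fun i _ => ?_
        have := (hL i).ne'
        field_simp
    _ ≤ 2 * Lbar n L * ((1 / (n : ℝ)) * ∑ i, bregmanDiv (f i) (f' i) x w) := by
        have := Lbar_pos hn hL
        gcongr with i
        exact sq_norm_sub_div_le_bregmanDiv (hL i) (hgrad i) (hconv i) (hsmooth i) x w
    _ = 2 * Lbar n L * bregmanDiv (avgF n f) (avgG n f') x w := by rw [bregmanDiv_avgF]

/-- The loopless-SVRG estimator `g_i` of `∇F(x)` with reference point `w`, for index `i` drawn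
with probability `p i`. -/
noncomputable def svrgGrad (n : ℕ) (f' : Fin n → Euc d → Euc d) (p : Fin n → ℝ) (x w : Euc d)
    (i : Fin n) : Euc d :=
  (1 / ((n : ℝ) * p i)) • (f' i x - f' i w) + avgG n f' w

theorem sum_smul_svrgGrad {f' : Fin n → Euc d → Euc d} {p : Fin n → ℝ} (hp : ∀ i, p i ≠ 0)
    (hp1 : ∑ i, p i = 1) (x w : Euc d) :
    ∑ i, p i • svrgGrad n f' p x w i = avgG n f' x := by
  have hterm : ∀ i, p i • svrgGrad n f' p x w i
      = (1 / (n : ℝ)) • (f' i x - f' i w) + p i • avgG n f' w := fun i => by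
    rw [svrgGrad, smul_add, smul_smul, mul_one_div, mul_comm (n : ℝ), ← div_div, div_self (hp i)]
  simp only [hterm, sum_add_distrib, ← smul_sum, ← sum_smul, hp1, one_smul, sum_sub_distrib,
    smul_sub, avgG]
  abel

theorem sum_mul_sq_norm_avgG_sub_svrgGrad_le_Ve {f' : Fin n → Euc d → Euc d} {p : Fin n → ℝ}
    (hp : ∀ i, p i ≠ 0) (hp1 : ∑ i, p i = 1) (x w : Euc d) :
    ∑ i, p i * ‖avgG n f' x - svrgGrad n f' p x w i‖ ^ 2 ≤ Ve n f' p x w := by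
  set a : Fin n → Euc d := fun i => (1 / ((n : ℝ) * p i)) • (f' i x - f' i w)
  have hmean : ∑ j, p j • a j = avgG n f' x - avgG n f' w := by
    simp only [a, ← sum_smul_svrgGrad (f' := f') hp hp1 x w, svrgGrad, smul_add, sum_add_distrib,
      ← sum_smul, hp1, one_smul, add_sub_cancel_right]
  have hdev : ∀ i, avgG n f' x - svrgGrad n f' p x w i = ∑ j, p j • a j - a i := fun i => by
    rw [hmean, svrgGrad]
    abel
  have hsecond : ∑ i, p i * ‖a i‖ ^ 2 = Ve n f' p x w := by
    simp only [a, Ve, norm_smul, mul_pow, Real.norm_eq_abs, sq_abs, mul_sum]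
    refine sum_congr rfl fun i _ => ?_
    have := hp i
    field_simp
  simp only [hdev, sum_mul_sq_norm_sub_sum_smul hp1, ← hsecond]
  linarith [sq_nonneg ‖∑ j, p j • a j‖]

end FiniteSum

theorem as_lkatyusha_ZV_step_general (d n : ℕ) (hn : 0 < n)
    (f : Fin n → Euc d → ℝ) (f' : Fin n → Euc d → Euc d) (L : Fin n → ℝ) (μ : ℝ)
    (hgrad : ∀ i x, HasGradientAt (f i) (f' i x) x)
    (hconv : ∀ i x y, f i x + ⟪f' i x, y - x⟫ ≤ f i y)
    (hLpos : ∀ i, 0 < L i)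
    (hsmooth : ∀ i x y, ‖f' i x - f' i y‖ ≤ L i * ‖x - y‖)
    (hμ : 0 < μ)
    (hsc : ∀ x y : Euc d,
      avgF n f x + ⟪avgG n f' x, y - x⟫ + (μ / 2) * ‖y - x‖ ^ 2 ≤ avgF n f y)
    (xstar : Euc d)
    (θ₁ θ₂ κ η : ℝ) (hθ₁ : 0 < θ₁) (hθ₂ : 0 < θ₂) (hθsum : θ₁ + θ₂ ≤ 1)
    (hκ : κ = μ / Lbar n L) (hη : η = θ₂ / ((1 + θ₂) * θ₁))
    (z w v : Euc d) (x : Euc d)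
    (hx : x = θ₁ • z + θ₂ • w + (1 - θ₁ - θ₂) • v)
    (p : Fin n → ℝ) (hp : ∀ i, 0 < p i) (hp1 : ∑ i, p i = 1)
    (g z' v' : Fin n → Euc d)
    (hg : ∀ i, g i = (1 / ((n : ℝ) * p i)) • (f' i x - f' i w) + avgG n f' w)
    (hz' : ∀ i, z' i = (1 / (1 + η * κ)) • (η • κ • x + z - (η / Lbar n L) • g i))
    (hv' : ∀ i, v' i = x + θ₁ • (z' i - z))
    (Z V : Euc d → ℝ)
    (hZ : ∀ u, Z u = (Lbar n L * (1 + η * κ) / (2 * η)) * ‖u - xstar‖ ^ 2)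
    (hV : ∀ u, V u = (1 / θ₁) * (avgF n f u - avgF n f xstar)) :
    ∑ i, p i * (Z (z' i) + V (v' i)) ≤
      (1 - θ₁ - θ₂) * V v + (1 / (1 + η * κ)) * Z z +
      (θ₂ / θ₁) * (avgF n f w - avgF n f xstar) +
      (θ₂ / (2 * Lbar n L * θ₁)) * (Ve n f' p x w - Ve n f' (pIS n L) x w) := by
  have hLb := Lbar_pos hn hLpos
  obtain rfl : g = svrgGrad n f' p x w := funext hg
  set A := 1 / θ₁ * (avgF n f x - avgF n f xstar) + μ / 2 * ‖x - xstar‖ ^ 2 +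
    Lbar n L / (2 * η) * ‖z - xstar‖ ^ 2 with hA
  set c := θ₂ / (2 * Lbar n L * θ₁)
  have hstep : ∀ i, Z (z' i) + V (v' i) ≤
      A + c * ‖avgG n f' x - svrgGrad n f' p x w i‖ ^ 2 + ⟪svrgGrad n f' p x w i, xstar - z⟫ :=
    fun i => by
      rw [hZ, hV, hv' i]
      exact lkatyusha_step_le hLb (fun u => hasGradientAt_avgF fun j => hgrad j u)
        (norm_avgG_sub_le hsmooth) hμ.le hθ₁ hθ₂ hκ hη (hz' i)
  have hvar := sum_mul_sq_norm_avgG_sub_svrgGrad_le_Ve (f' := f') (fun i => (hp i).ne') hp1 x w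
  have hIS := Ve_pIS_le_two_mul_bregmanDiv hn hgrad hconv hLpos hsmooth x w
  have hcouple := inner_sub_add_le_of_coupling hμ.le hθ₁ hθsum (hsc x) hx (xstar := xstar)
  have hZz : 1 / (1 + η * κ) * Z z = Lbar n L / (2 * η) * ‖z - xstar‖ ^ 2 := by
    have : 0 < η := by rw [hη]; positivity
    have : 0 < κ := by rw [hκ]; positivity
    rw [hZ]; field_simp
  have hcB : c * (2 * Lbar n L * bregmanDiv (avgF n f) (avgG n f') x w) =
      θ₂ / θ₁ * bregmanDiv (avgF n f) (avgG n f') x w := by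
    simp only [c]
    field_simp
  have hc : 0 ≤ c := by positivity
  refine (sum_le_sum fun i _ => mul_le_mul_of_nonneg_left (hstep i) (hp i).le).trans ?_
  rw [sum_mul_add_mul_add_inner hp1, sum_smul_svrgGrad (fun i => (hp i).ne') hp1, hZz, hV v]
  linarith [hA, mul_le_mul_of_nonneg_left hvar hc, mul_le_mul_of_nonneg_left hIS hc]

/-- one-step AS-LKatyusha inequality for the `Z + V` potential. -/
theorem as_lkatyusha_ZV_step (d n : ℕ) (hd : 0 < d) (hn : 0 < n)
    (f : Fin n → Euc d → ℝ) (f' : Fin n → Euc d → Euc d) (L : Fin n → ℝ) (μ : ℝ)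
    (hgrad : ∀ i x, HasGradientAt (f i) (f' i x) x)
    (hconv : ∀ i x y, f i x + ⟪f' i x, y - x⟫ ≤ f i y)
    (hLpos : ∀ i, 0 < L i)
    (hsmooth : ∀ i x y, ‖f' i x - f' i y‖ ≤ L i * ‖x - y‖)
    (hμ : 0 < μ)
    (hsc : ∀ x y : Euc d,
      avgF n f x + ⟪avgG n f' x, y - x⟫ + (μ / 2) * ‖y - x‖ ^ 2 ≤ avgF n f y)
    (xstar : Euc d) (hmin : ∀ y, avgF n f xstar ≤ avgF n f y)
    (θ₁ θ₂ κ η : ℝ) (hθ₁ : 0 < θ₁) (hθ₂ : 0 < θ₂) (hθsum : θ₁ + θ₂ ≤ 1)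
    (hκ : κ = μ / Lbar n L) (hη : η = θ₂ / ((1 + θ₂) * θ₁))
    (z w v : Euc d) (x : Euc d)
    (hx : x = θ₁ • z + θ₂ • w + (1 - θ₁ - θ₂) • v)
    (p : Fin n → ℝ) (hp : ∀ i, 0 < p i) (hp1 : ∑ i, p i = 1)
    (g z' v' : Fin n → Euc d)
    (hg : ∀ i, g i = (1 / ((n : ℝ) * p i)) • (f' i x - f' i w) + avgG n f' w)
    (hz' : ∀ i, z' i = (1 / (1 + η * κ)) • (η • κ • x + z - (η / Lbar n L) • g i))
    (hv' : ∀ i, v' i = x + θ₁ • (z' i - z))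
    (Z V : Euc d → ℝ)
    (hZ : ∀ u, Z u = (Lbar n L * (1 + η * κ) / (2 * η)) * ‖u - xstar‖ ^ 2)
    (hV : ∀ u, V u = (1 / θ₁) * (avgF n f u - avgF n f xstar)) :
    ∑ i, p i * (Z (z' i) + V (v' i)) ≤
      (1 - θ₁ - θ₂) * V v + (1 / (1 + η * κ)) * Z z +
      (θ₂ / θ₁) * (avgF n f w - avgF n f xstar) +
      (θ₂ / (2 * Lbar n L * θ₁)) * (Ve n f' p x w - Ve n f' (pIS n L) x w) :=
  as_lkatyusha_ZV_step_general d n hn f f' L μ hgrad hconv hLpos hsmooth hμ hsc xstar θ₁ θ₂ κ η hθ₁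
    hθ₂ hθsum hκ hη z w v x hx p hp hp1 g z' v' hg hz' hv' Z V hZ hV
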